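/- For k ≥ 3, let x_1 ≥ ... ≥ x_k ≥ 0 be reals with x_1 + ... + x_k ≤ 1 maximizing f(x_1,...,x_k) = Σ_i (x_i²/2 - x_i³/2) + Σ_{i<j} (x_i x_j + x_i x_j²/2 - 3x_i² x_j/2 - 2x_j³/3) subject to these constraints and x_1 ≤ 1/2. If i < k is an index with x_1 = ... = x_i > x_{i+1}, then the directional derivative of f at (x_1,...,x_k) in the direction -e_i + e_{i+1} equals (x_i - x_{i+1})((i-1)x_i + 2(i+1)x_{i+1} + 3Σ_{j=i+2}^k x_j) and is strictly positive whenever x_{i+1} > 0 or i ≥ 2; consequently any maximizer has x_1 = ... = x_k. -/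

import Mathlib

/-!
At a maximizer `x`, moving mass `ε ≥ 0` from a coordinate to the next one keeps the constraints
as long as it does not reverse the order of the two coordinates, so the directional derivative
`∂F/∂x_{m+1} - ∂F/∂x_m` cannot be positive. If `x` is constant on its first `m + 1` coordinates,
this derivative factors as `(x_m - x_{m+1}) (m x_m + 2 (m + 2) x_{m+1} + 3 Σ_{j > m+1} x_j)`, which
is positive at the first strict descent unless `m = 0` and `x_1 = 0`. In that last case
`x = (A, 0, …, 0)` with `A ≤ 1/2`, the sum constraint is slack, and raising `x_1` alone increases
`F` at rate `A - 3A²/2 > 0`.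
-/

/-- The continuous analogue of the distance-unbalancedness of a subdivided star. -/
noncomputable def F {k : ℕ} (x : Fin k → ℝ) : ℝ :=
  (∑ i : Fin k, (x i ^ 2 / 2 - x i ^ 3 / 2))
    + ∑ i : Fin k, ∑ j ∈ Finset.Ioi i,
        (x i * x j + x i * x j ^ 2 / 2 - 3 * x i ^ 2 * x j / 2 - 2 * x j ^ 3 / 3)

open Finset

theorem HasDerivAt.nonpos_of_forall_mem_Icc_le {g : ℝ → ℝ} {D δ : ℝ} (hg : HasDerivAt g D 0)
    (hδ : 0 < δ) (hle : ∀ ε ∈ Set.Icc 0 δ, g ε ≤ g 0) : D ≤ 0 := by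
  have hmax : IsLocalMaxOn g (Set.Ici 0) 0 :=
    Filter.mem_of_superset (Icc_mem_nhdsGE hδ) fun ε hε => hle ε hε
  have hcone : (1 : ℝ) ∈ posTangentConeAt (Set.Ici 0) 0 :=
    mem_posTangentConeAt_of_segment_subset (by simp [segment_eq_Icc, Set.Icc_subset_Ici_self])
  simpa using hmax.hasFDerivWithinAt_nonpos hg.hasDerivWithinAt.hasFDerivWithinAt hcone

theorem exists_first_drop {k : ℕ} {α : Type*} [LinearOrder α] {y : Fin k → α} (hy : Antitone y)
    (hne : ∃ i j, y i ≠ y j) :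
    ∃ a b : Fin k, (b : ℕ) = a + 1 ∧ (∀ j ≤ a, y j = y a) ∧ y b < y a := by
  classical
  obtain ⟨i, j, hij⟩ := hne
  have hk : 0 < k := i.pos
  set y₀ := y ⟨0, hk⟩
  have hle (l : Fin k) : y l ≤ y₀ := hy (Fin.mk_le_of_le_val (Nat.zero_le l))
  have hdrop : ∃ n, ∃ hn : n < k, y ⟨n, hn⟩ < y₀ := by
    by_cases hi : y i < y₀
    · exact ⟨i, i.isLt, hi⟩
    · refine ⟨j, j.isLt, (hle j).lt_of_ne fun hj => hij ?_⟩
      rw [hj]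
      exact (hle i).antisymm (not_lt.1 hi)
  obtain ⟨hn, hn_lt⟩ := Nat.find_spec hdrop
  have htop (l : Fin k) (hl : (l : ℕ) < Nat.find hdrop) : y l = y₀ :=
    (hle l).antisymm (not_lt.1 fun h => Nat.find_min hdrop hl ⟨l.isLt, h⟩)
  obtain ⟨m, hm⟩ : ∃ m, Nat.find hdrop = m + 1 :=
    Nat.exists_eq_succ_of_ne_zero fun h => by simp [h, y₀] at hn_lt
  have hym : y ⟨m, by omega⟩ = y₀ := htop _ (by simp [hm])
  refine ⟨⟨m, by omega⟩, ⟨m + 1, by omega⟩, rfl, fun l hl => ?_, ?_⟩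
  · rw [hym, htop l (by have : (l : ℕ) ≤ m := hl; omega)]
  · simpa [hym, hm] using hn_lt

variable {k : ℕ}

/-- `gradF x l` is the partial derivative `∂F/∂x_l` at `x`. -/
noncomputable def gradF (x : Fin k → ℝ) (l : Fin k) : ℝ :=
  x l - 3 / 2 * x l ^ 2 + ∑ j ∈ Ioi l, (x j + x j ^ 2 / 2 - 3 * x l * x j)
    + ∑ i ∈ Iio l, (x i + x i * x l - 3 / 2 * x i ^ 2 - 2 * x l ^ 2)

theorem hasDerivAt_F_add_smul (x v : Fin k → ℝ) :
    HasDerivAt (fun ε : ℝ => F (x + ε • v)) (∑ l, v l * gradF x l) 0 := by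
  have hu (i : Fin k) : HasDerivAt (fun ε : ℝ => x i + ε * v i) (v i) 0 := by
    simpa using ((hasDerivAt_id (0 : ℝ)).mul_const (v i)).const_add (x i)
  have hdiag : HasDerivAt (fun ε : ℝ => ∑ i, ((x i + ε * v i) ^ 2 / 2 - (x i + ε * v i) ^ 3 / 2))
      (∑ i, v i * (x i - 3 / 2 * x i ^ 2)) 0 := by
    refine HasDerivAt.fun_sum fun i _ => ?_
    convert (((hu i).fun_pow 2).div_const 2).fun_sub (((hu i).fun_pow 3).div_const 2) using 1
    simp only [zero_mul, add_zero]
    ring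
  have hpair : HasDerivAt (fun ε : ℝ => ∑ i, ∑ j ∈ Ioi i,
        ((x i + ε * v i) * (x j + ε * v j) + (x i + ε * v i) * (x j + ε * v j) ^ 2 / 2
          - 3 * (x i + ε * v i) ^ 2 * (x j + ε * v j) / 2 - 2 * (x j + ε * v j) ^ 3 / 3))
      (∑ i, ∑ j ∈ Ioi i, (v i * (x j + x j ^ 2 / 2 - 3 * x i * x j)
        + v j * (x i + x i * x j - 3 / 2 * x i ^ 2 - 2 * x j ^ 2))) 0 := by
    refine HasDerivAt.fun_sum fun i _ => HasDerivAt.fun_sum fun j _ => ?_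
    convert ((((hu i).fun_mul (hu j)).fun_add
        (((hu i).fun_mul ((hu j).fun_pow 2)).div_const 2)).fun_sub
        (((((hu i).fun_pow 2).const_mul 3).fun_mul (hu j)).div_const 2)).fun_sub
        ((((hu j).fun_pow 3).const_mul 2).div_const 3) using 1
    simp only [zero_mul, add_zero]
    push_cast
    ring
  refine ((hdiag.add hpair).congr_deriv ?_).congr_of_eventuallyEq (.of_forall fun ε => ?_)
  · have hswap : ∑ i, ∑ j ∈ Ioi i, v j * (x i + x i * x j - 3 / 2 * x i ^ 2 - 2 * x j ^ 2)
        = ∑ j, ∑ i ∈ Iio j, v j * (x i + x i * x j - 3 / 2 * x i ^ 2 - 2 * x j ^ 2) :=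
      sum_comm' fun i j => by simp
    simp only [gradF, mul_add, sum_add_distrib, mul_sum, hswap]
    ring
  · simp only [F, Pi.add_apply, Pi.smul_apply, smul_eq_mul]

theorem sum_single_sub_single_mul (g : Fin k → ℝ) (a b : Fin k) :
    ∑ l, (Pi.single b 1 - Pi.single a 1 : Fin k → ℝ) l * g l = g b - g a := by
  simp [sub_mul, sum_sub_distrib, Pi.single_apply]

theorem sum_single_mul (g : Fin k → ℝ) (b : Fin k) :
    ∑ l, (Pi.single b 1 : Fin k → ℝ) l * g l = g b := by
  simp [Pi.single_apply]

theorem gradF_succ_sub_gradF {x : Fin k → ℝ} {a b : Fin k} (hab : (b : ℕ) = a + 1)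
    (hconst : ∀ j ≤ a, x j = x a) :
    gradF x b - gradF x a
      = (x a - x b) * ((a : ℕ) * x a + 2 * ((a : ℕ) + 2) * x b + 3 * ∑ j ∈ Ioi b, x j) := by
  have hIoi : Ioi a = insert b (Ioi b) := by
    ext j; simp only [mem_Ioi, mem_insert, Fin.lt_def, Fin.ext_iff]; omega
  have hIio : Iio b = insert a (Iio a) := by
    ext j; simp only [mem_Iio, mem_insert, Fin.lt_def, Fin.ext_iff]; omega
  have hprefix (f : ℝ → ℝ) : ∑ i ∈ Iio a, f (x i) = (a : ℕ) * f (x a) := by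
    rw [sum_congr rfl fun i hi => by rw [hconst i (mem_Iio.mp hi).le], sum_const, Fin.card_Iio,
      nsmul_eq_mul]
  simp only [gradF, hIoi, hIio, sum_insert (notMem_Ioi_self : b ∉ Ioi b),
    sum_insert (notMem_Iio_self : a ∉ Iio a),
    hprefix fun t => t + t * x b - 3 / 2 * t ^ 2 - 2 * x b ^ 2,
    hprefix fun t => t + t * x a - 3 / 2 * t ^ 2 - 2 * x a ^ 2,
    sum_add_distrib, sum_sub_distrib, ← mul_sum, ← sum_div]
  ring

theorem transfer_derivative_pos {a b S : ℝ} {m : ℕ} (hb : 0 ≤ b) (hS : 0 ≤ S) (hba : b < a)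
    (h : 0 < b ∨ 1 ≤ m) : 0 < (a - b) * (m * a + 2 * (m + 2) * b + 3 * S) := by
  have ha : 0 ≤ a := hb.trans hba.le
  have hm : (0 : ℝ) ≤ m := m.cast_nonneg
  refine mul_pos (by linarith) ?_
  rcases h with h | h
  · nlinarith [mul_nonneg hm ha, mul_nonneg hm hb]
  · have : (1 : ℝ) ≤ m := by exact_mod_cast h
    nlinarith [mul_nonneg hm hb]

theorem gradF_of_forall_ne_eq_zero {x : Fin k → ℝ} {a b : Fin k} (hab : a < b)
    (hx : ∀ j, j ≠ a → x j = 0) : gradF x b = x a - 3 / 2 * x a ^ 2 := by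
  have hxb : x b = 0 := hx b hab.ne'
  have hIoi : ∑ j ∈ Ioi b, (x j + x j ^ 2 / 2 - 3 * x b * x j) = 0 :=
    sum_eq_zero fun j hj => by simp [hx j (hab.trans (mem_Ioi.1 hj)).ne']
  have hIio : ∑ i ∈ Iio b, (x i + x i * x b - 3 / 2 * x i ^ 2 - 2 * x b ^ 2)
      = x a - 3 / 2 * x a ^ 2 := by
    rw [sum_eq_single_of_mem a (mem_Iio.2 hab) fun i _ hi => by simp [hx i hi, hxb]]
    simp [hxb]
  rw [gradF, hIoi, hIio, hxb]
  ring

section Transfer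

variable {x : Fin k → ℝ} {a b : Fin k} {ε : ℝ}

def transfer (x : Fin k → ℝ) (a b : Fin k) (ε : ℝ) : Fin k → ℝ :=
  Function.update (Function.update x a (x a - ε)) b (x b + ε)

theorem transfer_apply (x : Fin k → ℝ) (a b : Fin k) (ε : ℝ) (i : Fin k) :
    transfer x a b ε i = if i = b then x b + ε else if i = a then x a - ε else x i := by
  simp only [transfer, Function.update_apply]

theorem transfer_eq_add_smul (x : Fin k → ℝ) (hab : a ≠ b) (ε : ℝ) :
    transfer x a b ε = x + ε • (Pi.single b 1 - Pi.single a 1) := by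
  ext i
  rw [transfer_apply]
  split_ifs with hib hia <;> subst_vars <;> simp [*, hab.symm]
  ring

theorem antitone_transfer (hx : Antitone x) (hab : (b : ℕ) = a + 1)
    (hε : 0 ≤ ε) (hgap : 2 * ε ≤ x a - x b) : Antitone (transfer x a b ε) := by
  have hab' : a ≠ b := Fin.ne_of_val_ne (by omega)
  refine antitone_iff_forall_lt.2 fun i j hij => ?_
  have hij' : (i : ℕ) < j := hij
  simp only [transfer_apply x a b]
  rcases eq_or_ne j b with rfl | hjb
  · rcases eq_or_ne i a with rfl | hia
    · simp [hab']; linarith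
    · have hia' : i ≤ a := Fin.le_def.2 (by omega)
      simp [hia, hij.ne]
      linarith [hx hia']
  · rcases eq_or_ne i a with rfl | hia
    · have hbj : b ≤ j := Fin.le_def.2 (by have := Fin.val_ne_of_ne hjb; omega)
      simp [hjb, hij.ne', hab']
      linarith [hx hbj]
    · simp only [hjb, hia, if_false]
      split_ifs <;> subst_vars <;> linarith [hx hij.le]

theorem transfer_nonneg (hx : ∀ i, 0 ≤ x i) (hε : 0 ≤ ε) (hgap : ε ≤ x a) (i : Fin k) :
    0 ≤ transfer x a b ε i := by
  rw [transfer_apply]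
  split_ifs <;> linarith [hx i, hx b]

theorem sum_transfer (x : Fin k → ℝ) (hab : a ≠ b) (ε : ℝ) :
    ∑ i, transfer x a b ε i = ∑ i, x i := by
  simp [transfer_eq_add_smul x hab, sum_add_distrib, sum_sub_distrib, ← mul_sum]

theorem transfer_apply_le_of_ne (x : Fin k → ℝ) {i : Fin k} (hib : i ≠ b) (hε : 0 ≤ ε) :
    transfer x a b ε i ≤ x i := by
  simp only [transfer_apply, hib, if_false]
  split_ifs with hia
  · subst hia; linarith
  · exact le_rfl

theorem le_add_smul_single_apply (x : Fin k → ℝ) (hε : 0 ≤ ε) (i : Fin k) :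
    x i ≤ (x + ε • Pi.single b 1 : Fin k → ℝ) i := by
  simpa using mul_nonneg hε ((Pi.single_nonneg.2 zero_le_one : (0 : Fin k → ℝ) ≤ Pi.single b 1) i)

theorem antitone_add_smul_single (hx : Antitone x) (hε : 0 ≤ ε)
    (hroom : ∀ i < b, x b + ε ≤ x i) : Antitone (x + ε • Pi.single b 1 : Fin k → ℝ) := by
  intro i j hij
  rcases eq_or_ne j b with rfl | hjb
  · rcases hij.lt_or_eq with hij | rfl
    · simp [hij.ne, hroom i hij]
    · exact le_rfl
  · simpa [hjb] using (hx hij).trans (le_add_smul_single_apply x hε i)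

theorem hasDerivAt_F_transfer (x : Fin k → ℝ) (hab : a ≠ b) :
    HasDerivAt (fun ε => F (transfer x a b ε)) (gradF x b - gradF x a) 0 := by
  simpa only [transfer_eq_add_smul x hab] using (hasDerivAt_F_add_smul x _).congr_deriv
    (sum_single_sub_single_mul (gradF x) a b)

theorem hasDerivAt_F_add_smul_single (x : Fin k → ℝ) (b : Fin k) :
    HasDerivAt (fun ε : ℝ => F (x + ε • Pi.single b 1)) (gradF x b) 0 :=
  (hasDerivAt_F_add_smul x _).congr_deriv (sum_single_mul (gradF x) b)

end Transfer

def Admissible (hk : 0 < k) (y : Fin k → ℝ) : Prop :=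
  Antitone y ∧ (∀ i, 0 ≤ y i) ∧ ∑ i, y i ≤ 1 ∧ y ⟨0, hk⟩ ≤ 1 / 2

def IsMaximizer (hk : 0 < k) (x : Fin k → ℝ) : Prop :=
  Admissible hk x ∧ ∀ y, Admissible hk y → F y ≤ F x

namespace IsMaximizer

variable {hk : 0 < k} {x : Fin k → ℝ} {a b : Fin k}

theorem gradF_le_of_transfer (hx : IsMaximizer hk x) (hab : (b : ℕ) = a + 1)
    (hdrop : x b < x a) : gradF x b ≤ gradF x a := by
  obtain ⟨⟨hsort, hpos, hsum, hhalf⟩, hmax⟩ := hx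
  have hab' : a ≠ b := Fin.ne_of_val_ne (by omega)
  have hb0 : (⟨0, hk⟩ : Fin k) ≠ b := Fin.ne_of_val_ne (by simp; omega)
  refine sub_nonpos.1 <| (hasDerivAt_F_transfer x hab').nonpos_of_forall_mem_Icc_le
    (δ := (x a - x b) / 2) (by linarith) fun ε ⟨hε0, hε⟩ => ?_
  have hx0 : transfer x a b 0 = x := by simp [transfer]
  simp only [hx0]
  exact hmax _ ⟨antitone_transfer hsort hab hε0 (by linarith), transfer_nonneg hpos hε0
    (by linarith [hpos b]), (sum_transfer x hab' ε).trans_le hsum,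
    (transfer_apply_le_of_ne x hb0 hε0).trans hhalf⟩

theorem gradF_nonpos_of_sum_lt_one (hx : IsMaximizer hk x) (hab : (b : ℕ) = a + 1)
    (hdrop : x b < x a) (hslack : ∑ i, x i < 1) : gradF x b ≤ 0 := by
  obtain ⟨⟨hsort, hpos, -, hhalf⟩, hmax⟩ := hx
  have hb0 : (⟨0, hk⟩ : Fin k) ≠ b := Fin.ne_of_val_ne (by simp; omega)
  refine (hasDerivAt_F_add_smul_single x b).nonpos_of_forall_mem_Icc_le
    (δ := min (x a - x b) (1 - ∑ i, x i)) (lt_min (by linarith) (by linarith))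
    fun ε ⟨hε0, hε⟩ => ?_
  have hεa := hε.trans (min_le_left _ _)
  have hεs := hε.trans (min_le_right _ _)
  simp only [zero_smul, add_zero]
  refine hmax _ ⟨antitone_add_smul_single hsort hε0 fun i hi => ?_, fun i => ?_, ?_, ?_⟩
  · have hia : i ≤ a := Fin.le_def.2 (by have : (i : ℕ) < b := hi; omega)
    linarith [hsort hia]
  · exact (hpos i).trans (le_add_smul_single_apply x hε0 i)
  · simp only [Pi.add_apply, Pi.smul_apply, smul_eq_mul, sum_add_distrib, ← mul_sum,
      sum_pi_single', mem_univ, if_true]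
    linarith
  · simpa [hb0] using hhalf

theorem apply_eq (hx : IsMaximizer hk x) : ∀ i j, x i = x j := by
  obtain ⟨hsort, hpos, -, hhalf⟩ := hx.1
  by_contra! hne
  obtain ⟨a, b, hab, hconst, hdrop⟩ := exists_first_drop hsort hne
  by_cases hcase : 0 < x b ∨ 1 ≤ (a : ℕ)
  · have hgrad := hx.gradF_le_of_transfer hab hdrop
    rw [← sub_nonpos, gradF_succ_sub_gradF hab hconst] at hgrad
    exact (transfer_derivative_pos (hpos b) (sum_nonneg fun j _ => hpos j) hdrop hcase).not_ge hgrad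
  · rw [not_or, not_lt, not_le, Nat.lt_one_iff] at hcase
    obtain ⟨hxb, ha⟩ := hcase
    obtain rfl : a = ⟨0, hk⟩ := Fin.ext ha
    have hzero (j : Fin k) (hj : j ≠ ⟨0, hk⟩) : x j = 0 := by
      have hbj : b ≤ j := Fin.le_def.2 (by have := Fin.val_ne_of_ne hj; simp at this; omega)
      exact le_antisymm ((hsort hbj).trans hxb) (hpos j)
    have hslack : ∑ i, x i < 1 := by
      rw [Fintype.sum_eq_single _ hzero]
      linarith
    have hgrad := hx.gradF_nonpos_of_sum_lt_one hab hdrop hslack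
    rw [gradF_of_forall_ne_eq_zero (Fin.lt_def.2 (by omega)) hzero] at hgrad
    have hx0 : 0 < x ⟨0, hk⟩ := by linarith [hpos b]
    nlinarith [mul_pos hx0 (by linarith : 0 < 1 - 3 / 2 * x ⟨0, hk⟩)]

end IsMaximizer

theorem maximizer_directional_derivative {k : ℕ} (hk : 3 ≤ k) (x : Fin k → ℝ)
    (hsort : Antitone x) (hpos : ∀ i, 0 ≤ x i) (hsum : ∑ i, x i ≤ 1)
    (hhalf : x ⟨0, by omega⟩ ≤ 1 / 2)
    (hmax : ∀ y : Fin k → ℝ, Antitone y → (∀ i, 0 ≤ y i) → (∑ i, y i) ≤ 1 →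
      y ⟨0, by omega⟩ ≤ 1 / 2 → F y ≤ F x) :
    (∀ m : ℕ, ∀ hm : m + 1 < k,
      (∀ j : Fin k, j ≤ ⟨m, by omega⟩ → x j = x ⟨m, by omega⟩) →
      x ⟨m + 1, hm⟩ < x ⟨m, by omega⟩ →
        HasDerivAt
          (fun ε : ℝ => F (Function.update
            (Function.update x (⟨m, by omega⟩ : Fin k) (x ⟨m, by omega⟩ - ε))
            (⟨m + 1, hm⟩ : Fin k) (x ⟨m + 1, hm⟩ + ε)))
          ((x ⟨m, by omega⟩ - x ⟨m + 1, hm⟩)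
            * ((m : ℝ) * x ⟨m, by omega⟩ + 2 * ((m : ℝ) + 2) * x ⟨m + 1, hm⟩
              + 3 * ∑ j ∈ Finset.Ioi (⟨m + 1, hm⟩ : Fin k), x j)) 0
        ∧ ((0 < x ⟨m + 1, hm⟩ ∨ 1 ≤ m) →
            0 < (x ⟨m, by omega⟩ - x ⟨m + 1, hm⟩)
              * ((m : ℝ) * x ⟨m, by omega⟩ + 2 * ((m : ℝ) + 2) * x ⟨m + 1, hm⟩
                + 3 * ∑ j ∈ Finset.Ioi (⟨m + 1, hm⟩ : Fin k), x j)))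
    ∧ ∀ i j : Fin k, x i = x j := by
  have hx : IsMaximizer (by omega) x :=
    ⟨⟨hsort, hpos, hsum, hhalf⟩, fun y ⟨hy, hy0, hy1, hy2⟩ => hmax y hy hy0 hy1 hy2⟩
  refine ⟨fun m hm hconst hdrop => ⟨?_, fun h => ?_⟩, hx.apply_eq⟩
  · have h := hasDerivAt_F_transfer x (a := ⟨m, by omega⟩) (b := ⟨m + 1, hm⟩) (by simp)
    rwa [gradF_succ_sub_gradF rfl hconst] at h
  · exact transfer_derivative_pos (hpos _) (sum_nonneg fun j _ => hpos j) hdrop h
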